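/- arXiv:1206.6027 — 2 statements merged into one kernel-verified Lean document; each statement's English description precedes it below -/
import Mathlib

section
/- For every two-sided ideal I of F, the homogenization I^* equals the two-sided ideal of F̄ generated by the set {f^* : f ∈ I, f ≠ 0} together with C, i.e. I^* = ⟨f^* : 0 ≠ f ∈ I⟩ + C. -/
noncomputable section

/-! ### Common definitions for the letterplace correspondence (La Scala)

`FA K Y` is the free associative algebra `K⟨Y⟩` (monoid algebra of the free monoid on `Y`);
`PL K Y` is the letterplace polynomial algebra `K[y(j) : y ∈ Y, j ∈ ℕ*]`.
The algebra `F̄ = K⟨X ∪ {t}⟩` is modeled as `FA K (Option X)` with `t = none`,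
and similarly `P̄ = PL K (Option X)`. -/

/-- The free associative algebra `K⟨Y⟩`. -/
abbrev FA (K : Type*) [CommSemiring K] (Y : Type*) := MonoidAlgebra K (FreeMonoid Y)

/-- The letterplace polynomial algebra `K[y(j)]`, with places in `ℕ* = ℕ+`. -/
abbrev PL (K : Type*) [CommSemiring K] (Y : Type*) := MvPolynomial (Y × ℕ+) K

variable (K : Type*) [Field K]

/-- The generator of `K⟨Y⟩` corresponding to a letter. -/
def gen {Y : Type*} (y : Y) : FA K Y := MonoidAlgebra.of K (FreeMonoid Y) (FreeMonoid.of y)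

/-- The extra letter `t` of `F̄ = K⟨X ∪ {t}⟩`. -/
def tv {X : Type*} : FA K (Option X) := gen K (none : Option X)

/-- `φ : F̄ → F̄`, the algebra endomorphism with `φ(x_i) = x_i`, `φ(t) = 1`. -/
def phi {X : Type*} : FA K (Option X) →ₐ[K] FA K (Option X) :=
  (MonoidAlgebra.lift K (FA K (Option X)) (FreeMonoid (Option X)))
    (FreeMonoid.lift fun o => Option.elim o 1 (fun x => gen K (some x)))

/-- `f` is homogeneous of degree `d` (all words in its support have length `d`). -/
def IsHomog {Y : Type*} (d : ℕ) (f : FA K Y) : Prop :=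
  ∀ w ∈ f.coeff.support, FreeMonoid.length w = d

/-- The homogeneous component of degree `d` of `f ∈ K⟨Y⟩`. -/
def homComp {Y : Type*} (d : ℕ) (f : FA K Y) : FA K Y :=
  ∑ w ∈ f.coeff.support.filter (fun w => FreeMonoid.length w = d), MonoidAlgebra.single w (f.coeff w)

/-- A two-sided ideal is graded (for the grading by total degree) iff it contains all
homogeneous components of its elements. -/
def IsGradedF {Y : Type*} (I : TwoSidedIdeal (FA K Y)) : Prop := ∀ f ∈ I, ∀ d, homComp K d f ∈ I

/-- `C ⊆ F̄`: the two-sided ideal generated by all homogeneous elements of `ker φ`,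
i.e. the largest graded ideal contained in `ker φ`. -/
def Cideal {X : Type*} : TwoSidedIdeal (FA K (Option X)) :=
  TwoSidedIdeal.span {f | (∃ d, IsHomog K d f) ∧ phi K f = 0}

/-- The embedding of free monoids `X* → (X ∪ {t})*`. -/
def embWord {X : Type*} : FreeMonoid X →* FreeMonoid (Option X) := FreeMonoid.map some

/-- The canonical embedding `F = K⟨X⟩ → F̄ = K⟨X ∪ {t}⟩`. -/
def emb {X : Type*} : FA K X →ₐ[K] FA K (Option X) :=
  (MonoidAlgebra.lift K (FA K (Option X)) (FreeMonoid X))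
    ((MonoidAlgebra.of K (FreeMonoid (Option X))).comp embWord)

/-- The top degree `deg(f)` of `f` (max length of a word in the support). -/
def degF {Y : Type*} (f : FA K Y) : ℕ := f.coeff.support.sup FreeMonoid.length

/-- The homogenization `f^* = Σ_k f_k t^{deg f − k} ∈ F̄` of `f ∈ F`. -/
def hstar {X : Type*} (f : FA K X) : FA K (Option X) :=
  ∑ w ∈ f.coeff.support,
    MonoidAlgebra.single
      (embWord w * (FreeMonoid.of (none : Option X)) ^ (degF K f - FreeMonoid.length w)) (f.coeff w)

/-- Homogenization of an element already written in `F̄` (used for elements of `φ(F̄) = F`). -/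
def hstarO {X : Type*} (f : FA K (Option X)) : FA K (Option X) :=
  ∑ w ∈ f.coeff.support,
    MonoidAlgebra.single
      (w * (FreeMonoid.of (none : Option X)) ^ (degF K f - FreeMonoid.length w)) (f.coeff w)

/-- The homogenization `I^*` of an ideal `I ⊆ F`: the two-sided ideal of `F̄` generated by all
homogeneous elements of `φ⁻¹(I)` (identifying `F` with its image in `F̄`). -/
def hstarIdeal {X : Type*} (I : TwoSidedIdeal (FA K X)) : TwoSidedIdeal (FA K (Option X)) :=
  TwoSidedIdeal.span {g | (∃ d, IsHomog K d g) ∧ ∃ f ∈ I, phi K g = emb K f}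

/-- The saturation `Sat(J) = φ(J)^*` of a graded ideal `C ⊆ J ⊆ F̄`: the two-sided ideal
generated by all homogeneous elements `g` with `φ(g) ∈ φ(J)`. -/
def SatF {X : Type*} (J : TwoSidedIdeal (FA K (Option X))) : TwoSidedIdeal (FA K (Option X)) :=
  TwoSidedIdeal.span {g | (∃ d, IsHomog K d g) ∧ ∃ h ∈ J, phi K g = phi K h}

/-! ### The commutative (letterplace) side -/

/-- The shift of letterplace variables: `k · y(j) = y(j + k)`. -/
def shiftVar {Y : Type*} (k : ℕ) (p : Y × ℕ+) : Y × ℕ+ :=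
  (p.1, ⟨p.2 + k, Nat.add_pos_left p.2.2 k⟩)

/-- The action of `k ∈ ℕ` on the letterplace algebra. -/
def shift {Y : Type*} (k : ℕ) : PL K Y →ₐ[K] PL K Y := MvPolynomial.rename (shiftVar k)

/-- An ideal of `PL K Y` is an ℕ-ideal if it is stable under all shifts. -/
def IsNIdeal {Y : Type*} (I : Ideal (PL K Y)) : Prop := ∀ k, ∀ f ∈ I, shift K k f ∈ I

/-- The ℕ-ideal `⟨S⟩_ℕ` generated by a set `S`. -/
def nspan {Y : Type*} (S : Set (PL K Y)) : Ideal (PL K Y) :=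
  Ideal.span {g | ∃ k, ∃ f ∈ S, g = shift K k f}

/-- The place multidegree `∂(m)` of a monomial. -/
def placeDeg {Y : Type*} (m : (Y × ℕ+) →₀ ℕ) : ℕ+ →₀ ℕ := Finsupp.mapDomain Prod.snd m

/-- `f` is multihomogeneous of place multidegree `μ`. -/
def IsMultiHomog {Y : Type*} (μ : ℕ+ →₀ ℕ) (f : PL K Y) : Prop :=
  ∀ m ∈ f.support, placeDeg m = μ

/-- The multihomogeneous component of multidegree `μ` of `f`. -/
def mComp {Y : Type*} (μ : ℕ+ →₀ ℕ) (f : PL K Y) : PL K Y :=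
  ∑ m ∈ f.support.filter (fun m => placeDeg m = μ),
    MvPolynomial.monomial m (MvPolynomial.coeff m f)

/-- An ideal is multigraded iff it contains all multihomogeneous components of its elements. -/
def IsMultiGraded {Y : Type*} (I : Ideal (PL K Y)) : Prop := ∀ f ∈ I, ∀ μ, mComp K μ f ∈ I

/-- `ψ : P̄ → P̄`, with `ψ(x_i(j)) = x_i(j)` and `ψ(t(j)) = 1`. -/
def psi {X : Type*} : PL K (Option X) →ₐ[K] PL K (Option X) :=
  MvPolynomial.aeval (fun p => Option.elim p.1 1 (fun x => MvPolynomial.X (some x, p.2)))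

/-- The canonical embedding `P → P̄`. -/
def embP {X : Type*} : PL K X →ₐ[K] PL K (Option X) :=
  MvPolynomial.rename (fun p => (some p.1, p.2))

/-- The top multidegree `∂(f)` of `f` (componentwise max over the support). -/
def topDeg {Y : Type*} (f : PL K Y) : ℕ+ →₀ ℕ := f.support.sup placeDeg

/-- The pure-`t` monomial `∏_k t(k)^{ν_k}` with exponents `ν`. -/
def tExp {X : Type*} (ν : ℕ+ →₀ ℕ) : ((Option X) × ℕ+) →₀ ℕ :=
  Finsupp.mapDomain (fun k => ((none : Option X), k)) ν

/-- The multihomogenization `f^* = Σ_μ f_μ ∏_k t(k)^{ν_k − μ_k} ∈ P̄` of `f ∈ P`. -/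
def mhstar {X : Type*} (f : PL K X) : PL K (Option X) :=
  ∑ m ∈ f.support,
    MvPolynomial.monomial
      (Finsupp.mapDomain (fun p => ((some p.1 : Option X), p.2)) m +
        tExp (topDeg K f - placeDeg m))
      (MvPolynomial.coeff m f)

/-- Multihomogenization of an element already written in `P̄` (used for elements of `ψ(P̄) = P`). -/
def mhstarO {X : Type*} (f : PL K (Option X)) : PL K (Option X) :=
  ∑ m ∈ f.support,
    MvPolynomial.monomial (m + tExp (topDeg K f - placeDeg m)) (MvPolynomial.coeff m f)

/-- The multihomogenization `I^*` of an ℕ-ideal `I ⊆ P`: the ℕ-ideal of `P̄` generated by all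
multihomogeneous elements of `ψ⁻¹(I)` (identifying `P` with its image in `P̄`). -/
def mhstarIdeal {X : Type*} (I : Ideal (PL K X)) : Ideal (PL K (Option X)) :=
  nspan K {g | (∃ μ, IsMultiHomog K μ g) ∧ ∃ f ∈ I, psi K g = embP K f}

/-- The saturation `Sat(J) = ψ(J)^*` of a multigraded ℕ-ideal `J ⊆ P̄`. -/
def SatP {X : Type*} (J : Ideal (PL K (Option X))) : Ideal (PL K (Option X)) :=
  nspan K {g | (∃ μ, IsMultiHomog K μ g) ∧ ∃ h ∈ J, psi K g = psi K h}

/-! ### The letterplace embedding -/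

/-- Exponent vector of the letterplace monomial `y_1(n+1) y_2(n+2) ⋯` of a word. -/
def wordExpAux {Y : Type*} : ℕ → List Y → ((Y × ℕ+) →₀ ℕ)
  | _, [] => 0
  | n, y :: w => Finsupp.single (y, ⟨n + 1, n.succ_pos⟩) 1 + wordExpAux (n + 1) w

/-- The letterplace monomial `y_1(1) y_2(2) ⋯ y_d(d)` of a word `y_1 y_2 ⋯ y_d`. -/
def wordExp {Y : Type*} (w : FreeMonoid Y) : (Y × ℕ+) →₀ ℕ := wordExpAux 0 (FreeMonoid.toList w)

/-- The letterplace embedding `ι : K⟨Y⟩ → PL K Y` (a `K`-linear map). -/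
def iota {Y : Type*} (f : FA K Y) : PL K Y :=
  Finsupp.sum f.coeff fun w c => MvPolynomial.monomial (wordExp w) c

/-- The set `L` of multilinear elements of `PL K Y`: multihomogeneous elements of `V = Im ι`. -/
def Lset {Y : Type*} : Set (PL K Y) :=
  {f | f ∈ Set.range (iota K (Y := Y)) ∧ ∃ μ, IsMultiHomog K μ f}

/-- A letterplace ideal (`L`-ideal): an ℕ-ideal ℕ-generated by its multilinear elements. -/
def IsLPIdeal {Y : Type*} (J : Ideal (PL K Y)) : Prop :=
  IsNIdeal K J ∧ J = nspan K ((J : Set (PL K Y)) ∩ Lset K)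

/-- The generators `x_i(1)t(2) − t(1)x_i(2)` of `D`. -/
def Dgens (X : Type*) : Set (PL K (Option X)) :=
  {g | ∃ x : X,
    g = MvPolynomial.X ((some x : Option X), (1 : ℕ+)) *
          MvPolynomial.X ((none : Option X), (2 : ℕ+)) -
        MvPolynomial.X ((none : Option X), (1 : ℕ+)) *
          MvPolynomial.X ((some x : Option X), (2 : ℕ+))}

/-- The generators `ῑ([t, x_i]) = t(1)x_i(2) − x_i(1)t(2)` of `D`. -/
def DgensT (X : Type*) : Set (PL K (Option X)) :=
  {g | ∃ x : X,
    g = MvPolynomial.X ((none : Option X), (1 : ℕ+)) *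
          MvPolynomial.X ((some x : Option X), (2 : ℕ+)) -
        MvPolynomial.X ((some x : Option X), (1 : ℕ+)) *
          MvPolynomial.X ((none : Option X), (2 : ℕ+))}

/-- `D ⊆ P̄`: the letterplace analogue of `C`. -/
def Did (X : Type*) : Ideal (PL K (Option X)) := nspan K (Dgens K X)

/-- The product `∏_{d < k ≤ d'} t(k)`. -/
def tProd (X : Type*) (d d' : ℕ) : PL K (Option X) :=
  ∏ k ∈ Finset.range (d' - d), MvPolynomial.X ((none : Option X), ⟨d + k + 1, Nat.succ_pos _⟩)

/-- The `L`-saturation `Sat_L(J)` of a letterplace ideal `D ⊆ J ⊆ P̄`. -/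
def SatL {X : Type*} (J : Ideal (PL K (Option X))) : Ideal (PL K (Option X)) :=
  nspan K {f | f ∈ Lset K ∧ ∃ d', MvPolynomial.totalDegree f ≤ d' ∧
    tProd K X (MvPolynomial.totalDegree f) d' * f ∈ J}

/-- `J` is `L`-saturated: `t(d+1)·f ∈ J` with `f` multilinear of degree `d` implies `f ∈ J`. -/
def IsLSat {X : Type*} (J : Ideal (PL K (Option X))) : Prop :=
  ∀ f ∈ Lset K (Y := Option X),
    MvPolynomial.X ((none : Option X), ⟨MvPolynomial.totalDegree f + 1, Nat.succ_pos _⟩) * f ∈ J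
      → f ∈ J

/-! ### Monomial orderings -/

/-- The shift action on letterplace monomials. -/
def shiftMon {Y : Type*} (k : ℕ) (m : (Y × ℕ+) →₀ ℕ) : (Y × ℕ+) →₀ ℕ :=
  Finsupp.mapDomain (shiftVar k) m

/-- A monomial ordering of a (possibly infinite) commutative polynomial ring, given as a strict
order relation on exponent vectors: a well-founded strict total order with `1` minimal,
compatible with multiplication of monomials. -/
structure IsMonOrd {σ : Type*} (r : (σ →₀ ℕ) → (σ →₀ ℕ) → Prop) : Prop where
  total : ∀ m n, r m n ∨ m = n ∨ r n m
  irrefl : ∀ m, ¬ r m m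
  trans : ∀ a b c, r a b → r b c → r a c
  wf : WellFounded r
  zero_min : ∀ m, ¬ r m 0
  add_compat : ∀ m n u, r m n → r (u + m) (u + n)

/-- The ordering is compatible with the ℕ-action (an `ℕ`-ordering). -/
def IsNCompat {Y : Type*} (r : ((Y × ℕ+) →₀ ℕ) → ((Y × ℕ+) →₀ ℕ) → Prop) : Prop :=
  ∀ (k : ℕ) m n, r m n → r (shiftMon k m) (shiftMon k n)

/-- The weight of a letterplace monomial: the largest place index occurring in it
(`⊥ = -∞` for the monomial `1`). -/
def wt {Y : Type*} (m : (Y × ℕ+) →₀ ℕ) : WithBot ℕ :=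
  m.support.sup (fun p => ((p.2 : ℕ) : WithBot ℕ))

/-- A weighted ordering: smaller weight implies smaller monomial. -/
def IsWeighted {Y : Type*} (r : ((Y × ℕ+) →₀ ℕ) → ((Y × ℕ+) →₀ ℕ) → Prop) : Prop :=
  ∀ m n, wt m < wt n → r m n

/-- A monomial ordering of the free algebra `K⟨Y⟩`: a well-founded strict total order on words
compatible with two-sided multiplication. -/
structure IsWordOrd {Y : Type*} (r : FreeMonoid Y → FreeMonoid Y → Prop) : Prop where
  total : ∀ m n, r m n ∨ m = n ∨ r n m
  irrefl : ∀ m, ¬ r m m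
  trans : ∀ a b c, r a b → r b c → r a c
  wf : WellFounded r
  mul_compat : ∀ m n u v, r m n → r (u * m * v) (u * n * v)

/-- A word ordering is graded if shorter words are smaller. -/
def IsGradedWordOrd {Y : Type*} (r : FreeMonoid Y → FreeMonoid Y → Prop) : Prop :=
  ∀ m n, FreeMonoid.length m < FreeMonoid.length n → r m n

/-- The word ordering of `K⟨Y⟩` induced by a monomial ordering of `PL K Y` via `ι`. -/
def inducedWordOrd {Y : Type*} (r : ((Y × ℕ+) →₀ ℕ) → ((Y × ℕ+) →₀ ℕ) → Prop)
    (m n : FreeMonoid Y) : Prop := r (wordExp m) (wordExp n)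

/-- The factor of a letterplace monomial at place `j` (a monomial of `P(j) ≅ P(1)`). -/
def fiber {Y : Type*} (m : (Y × ℕ+) →₀ ℕ) (j : ℕ+) : Y →₀ ℕ :=
  Finsupp.comapDomain (fun y => (y, j)) m (fun _ _ _ _ h => congrArg Prod.fst h)

/-- The place `ℕ`-ordering of `PL K Y` induced by a monomial ordering `r1` of `P(1)`:
compare the factors at the highest place where the two monomials differ. -/
def placeExt {Y : Type*} (r1 : (Y →₀ ℕ) → (Y →₀ ℕ) → Prop)
    (m n : (Y × ℕ+) →₀ ℕ) : Prop :=
  ∃ j : ℕ+, r1 (fiber m j) (fiber n j) ∧ ∀ j', j < j' → fiber m j' = fiber n j'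

/-! ### Leading monomials and Gröbner bases -/

/-- `m` is the leading monomial of `f ∈ PL K Y` with respect to the ordering `r`. -/
def IsLM {Y : Type*} (r : ((Y × ℕ+) →₀ ℕ) → ((Y × ℕ+) →₀ ℕ) → Prop)
    (f : PL K Y) (m : (Y × ℕ+) →₀ ℕ) : Prop :=
  m ∈ f.support ∧ ∀ m' ∈ f.support, m' ≠ m → r m' m

/-- `LM(S)`: the ideal generated by the leading monomials of the nonzero elements of `S`. -/
def LMideal {Y : Type*} (r : ((Y × ℕ+) →₀ ℕ) → ((Y × ℕ+) →₀ ℕ) → Prop)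
    (S : Set (PL K Y)) : Ideal (PL K Y) :=
  Ideal.span {p | ∃ f ∈ S, f ≠ 0 ∧ ∃ m, IsLM K r f m ∧ p = MvPolynomial.monomial m (1 : K)}

/-- The ideal generated by `ℕ·lm(G)`. -/
def shLMideal {Y : Type*} (r : ((Y × ℕ+) →₀ ℕ) → ((Y × ℕ+) →₀ ℕ) → Prop)
    (G : Set (PL K Y)) : Ideal (PL K Y) :=
  Ideal.span {p | ∃ g ∈ G, g ≠ 0 ∧ ∃ m, IsLM K r g m ∧
    ∃ k : ℕ, p = MvPolynomial.monomial (shiftMon k m) (1 : K)}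

/-- `G ⊆ I` is a Gröbner `ℕ`-basis of the ℕ-ideal `I`: `ℕ·lm(G)` generates `LM(I)`. -/
def IsGroebnerNB {Y : Type*} (r : ((Y × ℕ+) →₀ ℕ) → ((Y × ℕ+) →₀ ℕ) → Prop)
    (I : Ideal (PL K Y)) (G : Set (PL K Y)) : Prop :=
  G ⊆ (I : Set (PL K Y)) ∧ shLMideal K r G = LMideal K r (I : Set (PL K Y))

/-- `G` is a Gröbner `L`-basis of the letterplace ideal `J`: `G ⊆ J ∩ L` and the leading monomial
of every nonzero multilinear element of `J` is divisible by a shift of some `lm(g)`, `g ∈ G`. -/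
def IsGroebnerLB {Y : Type*} (r : ((Y × ℕ+) →₀ ℕ) → ((Y × ℕ+) →₀ ℕ) → Prop)
    (J : Ideal (PL K Y)) (G : Set (PL K Y)) : Prop :=
  G ⊆ (J : Set (PL K Y)) ∩ Lset K ∧
  ∀ f ∈ (J : Set (PL K Y)) ∩ Lset K, f ≠ 0 →
    ∃ g ∈ G, ∃ (k : ℕ) (mg mf : (Y × ℕ+) →₀ ℕ),
      IsLM K r g mg ∧ IsLM K r f mf ∧ shiftMon k mg ≤ mf

/-- `w` is the leading monomial (word) of `f ∈ K⟨Y⟩` with respect to the word ordering `r'`. -/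
def IsLMF {Y : Type*} (r' : FreeMonoid Y → FreeMonoid Y → Prop)
    (f : FA K Y) (w : FreeMonoid Y) : Prop :=
  w ∈ f.coeff.support ∧ ∀ w' ∈ f.coeff.support, w' ≠ w → r' w' w

/-- `G ⊆ I` is a Gröbner basis of the two-sided ideal `I ⊆ K⟨Y⟩`: the leading word of every
nonzero `f ∈ I` has the form `u · lm(g) · v` for some nonzero `g ∈ G`. -/
def IsGroebnerBF {Y : Type*} (r' : FreeMonoid Y → FreeMonoid Y → Prop)
    (I : TwoSidedIdeal (FA K Y)) (G : Set (FA K Y)) : Prop :=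
  G ⊆ (I : Set (FA K Y)) ∧
  ∀ f ∈ I, f ≠ 0 → ∃ g ∈ G, g ≠ 0 ∧ ∃ (u v wf wg : FreeMonoid Y),
    IsLMF K r' f wf ∧ IsLMF K r' g wg ∧ wf = u * wg * v

/-! ### Normal forms -/

/-- The generators `x_i(1) x_j(1)` of `N`. -/
def Ngens (Y : Type*) : Set (PL K Y) :=
  {g | ∃ i j : Y, g = MvPolynomial.X (i, (1 : ℕ+)) * MvPolynomial.X (j, (1 : ℕ+))}

/-- A polynomial is in normal form modulo `N` iff in each of its monomials all place indices
are pairwise distinct. -/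
def NormalModN {Y : Type*} (f : PL K Y) : Prop :=
  ∀ m ∈ f.support, ∀ k : ℕ+, placeDeg m k ≤ 1

/-- A polynomial is in normal form modulo `D` iff none of its monomials is divisible by a shift
of the leading monomial of some generator `t(1)x_i(2) − x_i(1)t(2)` of `D`. -/
def NormalModD {X : Type*} (r : (((Option X) × ℕ+) →₀ ℕ) → (((Option X) × ℕ+) →₀ ℕ) → Prop)
    (f : PL K (Option X)) : Prop :=
  ∀ m ∈ f.support, ∀ g ∈ DgensT K X, ∀ mg, IsLM K r g mg → ∀ k : ℕ, ¬ shiftMon k mg ≤ m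

/-- `G` is a Gröbner `L`-basis of `J` modulo `D`: its elements are multilinear elements of `J`
in normal form modulo `D`, and together with the generators of `D` they form a
Gröbner `L`-basis of `J`. -/
def IsGroebnerLBmodD {X : Type*}
    (r : (((Option X) × ℕ+) →₀ ℕ) → (((Option X) × ℕ+) →₀ ℕ) → Prop)
    (J : Ideal (PL K (Option X))) (G : Set (PL K (Option X))) : Prop :=
  (∀ g ∈ G, g ∈ (J : Set (PL K (Option X))) ∩ Lset K ∧ NormalModD K r g) ∧
  IsGroebnerLB K r J (G ∪ DgensT K X)

/-- The commutators `[t, x_i] = t x_i − x_i t` in `F̄`. -/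
def commGens (X : Type*) : Set (FA K (Option X)) :=
  {h | ∃ x : X, h = tv K * gen K (some x) - gen K (some x) * tv K}

/-- A polynomial of `F̄` is in normal form modulo `C` iff none of its words contains the leading
word of some commutator `[t, x_i]` as a factor. -/
def NormalModC {X : Type*} (r' : FreeMonoid (Option X) → FreeMonoid (Option X) → Prop)
    (f : FA K (Option X)) : Prop :=
  ∀ w ∈ f.coeff.support, ∀ g ∈ commGens K X, ∀ wg, IsLMF K r' g wg →
    ¬ ∃ u v, w = u * wg * v

/-! ### Concrete orderings on words -/

/-- The order on the letters of `X ∪ {t}` (with `X = ℕ`): `t ≺ x_1 ≺ x_2 ≺ ⋯`. -/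
def optLt : Option ℕ → Option ℕ → Prop
  | none, some _ => True
  | some i, some j => i < j
  | _, none => False

/-- The graded right lexicographic ordering on words: first compare lengths, then compare
letter by letter from the right. -/
def grRightLex {Y : Type*} (lt : Y → Y → Prop) (dflt : Y) (m n : FreeMonoid Y) : Prop :=
  FreeMonoid.length m < FreeMonoid.length n ∨
  (FreeMonoid.length m = FreeMonoid.length n ∧
    ∃ t < FreeMonoid.length m,
      lt ((FreeMonoid.toList m).getD t dflt) ((FreeMonoid.toList n).getD t dflt) ∧
      ∀ s, t < s → (FreeMonoid.toList m).getD s dflt = (FreeMonoid.toList n).getD s dflt)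

end

/-!
A homogeneous `g ∈ F̄` of degree `d` with `φ(g) = f ∈ I` satisfies `deg f ≤ d`, and
`f^* t^{d - deg f}` is another homogeneous preimage of `f` of degree `d`. Their difference is a
homogeneous element of `ker φ`, so `g ∈ ⟨f^*⟩ + C`. Conversely every `f^*` is a homogeneous
preimage of `f`, and every generator of `C` is a homogeneous preimage of `0 ∈ I`.
-/

open MonoidAlgebra

section Words

variable {X : Type*}

def stripWord : FreeMonoid (Option X) →* FreeMonoid X :=
  FreeMonoid.lift fun o => o.elim 1 FreeMonoid.of

lemma stripWord_comp_embWord : stripWord.comp embWord = MonoidHom.id (FreeMonoid X) :=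
  FreeMonoid.hom_eq fun _ => rfl

@[simp]
lemma stripWord_embWord (w : FreeMonoid X) : stripWord (embWord w) = w :=
  DFunLike.congr_fun stripWord_comp_embWord w

@[simp]
lemma stripWord_of_none : stripWord (FreeMonoid.of (none : Option X)) = 1 := rfl

lemma length_stripWord_le (w : FreeMonoid (Option X)) :
    (stripWord w).length ≤ w.length := by
  induction w using FreeMonoid.inductionOn' with
  | one => simp
  | of_mul o w ih =>
    rw [map_mul, FreeMonoid.length_mul, FreeMonoid.length_mul]
    refine Nat.add_le_add ?_ ih
    cases o <;> simp [stripWord]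

lemma length_embWord (w : FreeMonoid X) : (embWord w).length = w.length := by
  simp [embWord, FreeMonoid.length, FreeMonoid.toList_map]

lemma embWord_injective : Function.Injective (embWord (X := X)) :=
  Function.LeftInverse.injective stripWord_embWord

end Words

@[simp]
lemma length_of_pow {Y : Type*} (y : Y) (k : ℕ) : (FreeMonoid.of y ^ k).length = k := by
  induction k with
  | zero => rfl
  | succ k ih => rw [pow_succ, FreeMonoid.length_mul, ih, FreeMonoid.length_of]

section Degree

variable (K : Type*) [Field K] {Y Z : Type*}

lemma isHomog_single (w : FreeMonoid Y) (c : K) : IsHomog K w.length (single w c) := by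
  intro u hu
  rw [Finset.mem_singleton.mp (Finsupp.support_single_subset hu)]

variable {K}

lemma IsHomog.add {d : ℕ} {a b : FA K Y} (ha : IsHomog K d a) (hb : IsHomog K d b) :
    IsHomog K d (a + b) := by
  classical
  intro w hw
  rcases Finset.mem_union.mp (Finsupp.support_add hw) with h | h
  exacts [ha w h, hb w h]

lemma IsHomog.sub {d : ℕ} {a b : FA K Y} (ha : IsHomog K d a) (hb : IsHomog K d b) :
    IsHomog K d (a - b) := by
  classical
  intro w hw
  rcases Finset.mem_union.mp (Finsupp.support_sub hw) with h | h
  exacts [ha w h, hb w h]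

lemma IsHomog.mul {d e : ℕ} {a b : FA K Y} (ha : IsHomog K d a) (hb : IsHomog K e b) :
    IsHomog K (d + e) (a * b) := by
  classical
  intro w hw
  obtain ⟨u, hu, v, hv, rfl⟩ := Finset.mem_mul.mp (support_coeff_mul_subset a b hw)
  rw [FreeMonoid.length_mul, ha u hu, hb v hv]

lemma isHomog_sum {ι : Type*} {s : Finset ι} {d : ℕ} {g : ι → FA K Y}
    (hg : ∀ i ∈ s, IsHomog K d (g i)) : IsHomog K d (∑ i ∈ s, g i) :=
  Finset.sum_induction g (IsHomog K d) (fun _ _ => IsHomog.add) (by simp [IsHomog]) hg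

lemma degF_le_of_isHomog {d : ℕ} {g : FA K Y} (hg : IsHomog K d g) : degF K g ≤ d :=
  Finset.sup_le fun w hw => (hg w hw).le

lemma degF_mapDomain_le {f : FreeMonoid Y → FreeMonoid Z} (hf : ∀ w, (f w).length ≤ w.length)
    (g : FA K Y) : degF K (mapDomain f g) ≤ degF K g := by
  classical
  refine Finset.sup_le fun u hu => ?_
  obtain ⟨w, hw, rfl⟩ := Finset.mem_image.mp (Finsupp.mapDomain_support hu)
  exact (hf w).trans (Finset.le_sup hw)

lemma degF_mapDomain_of_injective {f : FreeMonoid Y → FreeMonoid Z} (hinj : f.Injective)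
    (hf : ∀ w, (f w).length = w.length) (g : FA K Y) : degF K (mapDomain f g) = degF K g := by
  classical
  rw [degF, degF, mapDomain, coeff_ofCoeff, Finsupp.mapDomain_support_of_injective hinj,
    Finset.sup_image]
  exact Finset.sup_congr rfl fun w _ => hf w

end Degree

section Homogenization

variable (K : Type*) [Field K] {X : Type*}

lemma phi_eq_mapDomainAlgHom :
    phi K (X := X) = mapDomainAlgHom K K ((embWord (X := X)).comp stripWord) := by
  rw [lift_unique' (mapDomainAlgHom K K _), phi]
  congr 1
  refine FreeMonoid.hom_eq fun o => ?_
  cases o <;> simp [gen, stripWord, embWord, one_def]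

lemma emb_eq_mapDomainAlgHom : emb K (X := X) = mapDomainAlgHom K K (embWord (X := X)) := by
  rw [lift_unique' (mapDomainAlgHom K K _), emb]
  congr 1
  exact FreeMonoid.hom_eq fun x => by simp

lemma phi_apply (g : FA K (Option X)) : phi K g = mapDomain (embWord.comp stripWord) g := by
  rw [phi_eq_mapDomainAlgHom, mapDomainAlgHom_apply]

lemma emb_apply (f : FA K X) : emb K f = mapDomain embWord f := by
  rw [emb_eq_mapDomainAlgHom, mapDomainAlgHom_apply]

lemma degF_phi_le (g : FA K (Option X)) : degF K (phi K g) ≤ degF K g := by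
  rw [phi_apply]
  exact degF_mapDomain_le (fun w => (length_embWord _).trans_le (length_stripWord_le w)) g

lemma degF_emb (f : FA K X) : degF K (emb K f) = degF K f := by
  rw [emb_apply]
  exact degF_mapDomain_of_injective embWord_injective length_embWord f

lemma tv_pow (k : ℕ) : tv K (X := X) ^ k = single (FreeMonoid.of none ^ k) 1 := by
  rw [tv, gen, of_apply, single_pow, one_pow]

lemma isHomog_tv_pow (k : ℕ) : IsHomog K k (tv K (X := X) ^ k) := by
  simpa [tv_pow] using isHomog_single K (FreeMonoid.of (none : Option X) ^ k) (1 : K)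

lemma phi_tv : phi K (tv K (X := X)) = 1 := by
  rw [phi_apply, tv, gen, of_apply, mapDomain_single]
  simp [one_def]

lemma phi_hstar (f : FA K X) : phi K (hstar K f) = emb K f := by
  conv_rhs => rw [← sum_coeff_single f]
  rw [hstar, map_sum, Finsupp.sum, map_sum]
  simp [phi_apply, emb_apply]

lemma isHomog_hstar (f : FA K X) : IsHomog K (degF K f) (hstar K f) := by
  refine isHomog_sum fun w hw => ?_
  have hw : w.length ≤ degF K f := Finset.le_sup hw
  have := isHomog_single K (embWord w * FreeMonoid.of none ^ (degF K f - w.length)) (f.coeff w)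
  rwa [FreeMonoid.length_mul, length_embWord, length_of_pow, Nat.add_sub_cancel' hw] at this

lemma hstar_zero : hstar K (0 : FA K X) = 0 := by
  simp [hstar]

lemma hstar_mem_span {I : TwoSidedIdeal (FA K X)} {f : FA K X} (hf : f ∈ I) :
    hstar K f ∈ TwoSidedIdeal.span {g | ∃ f ∈ I, f ≠ 0 ∧ g = hstar K f} := by
  by_cases h0 : f = 0
  · rw [h0, hstar_zero]
    exact zero_mem _
  · exact TwoSidedIdeal.subset_span ⟨f, hf, h0, rfl⟩

lemma sub_hstar_mul_tv_pow_mem_Cideal {d : ℕ} {g : FA K (Option X)} {f : FA K X}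
    (hg : IsHomog K d g) (hgf : phi K g = emb K f) :
    g - hstar K f * tv K ^ (d - degF K f) ∈ Cideal K := by
  have hdeg : degF K f ≤ d :=
    calc degF K f = degF K (phi K g) := by rw [hgf, degF_emb]
      _ ≤ degF K g := degF_phi_le K g
      _ ≤ d := degF_le_of_isHomog hg
  have hhom : IsHomog K d (hstar K f * tv K ^ (d - degF K f)) := by
    simpa [Nat.add_sub_cancel' hdeg] using
      (isHomog_hstar K f).mul (isHomog_tv_pow K (d - degF K f))
  exact TwoSidedIdeal.subset_span ⟨⟨d, hg.sub hhom⟩, by simp [hgf, phi_hstar, phi_tv]⟩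

end Homogenization

theorem statement_1_general (K : Type*) [Field K] (X : Type*)
    (I : TwoSidedIdeal (FA K X)) :
    hstarIdeal K I =
      TwoSidedIdeal.span {g | ∃ f ∈ I, f ≠ 0 ∧ g = hstar K f} ⊔ Cideal K := by
  apply le_antisymm
  · refine TwoSidedIdeal.span_le.mpr ?_
    rintro g ⟨⟨d, hg⟩, f, hfI, hgf⟩
    rw [← add_sub_cancel (hstar K f * tv K ^ (d - degF K f)) g]
    exact add_mem
      (le_sup_left (a := TwoSidedIdeal.span _)
        (TwoSidedIdeal.mul_mem_right _ _ _ (hstar_mem_span K hfI)))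
      (le_sup_right (b := Cideal K) (sub_hstar_mul_tv_pow_mem_Cideal K hg hgf))
  · refine sup_le (TwoSidedIdeal.span_le.mpr ?_) (TwoSidedIdeal.span_le.mpr ?_)
    · rintro g ⟨f, hfI, -, rfl⟩
      exact TwoSidedIdeal.subset_span ⟨⟨degF K f, isHomog_hstar K f⟩, f, hfI, phi_hstar K f⟩
    · rintro g ⟨hg, hg0⟩
      exact TwoSidedIdeal.subset_span ⟨hg, 0, zero_mem I, by rw [hg0, map_zero]⟩

/-- For every two-sided ideal `I ⊆ F`, the homogenization `I^*` equals the
two-sided ideal of `F̄` generated by `{f^* : 0 ≠ f ∈ I}` together with `C`. -/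
theorem statement_1 (K : Type*) [Field K] (X : Type*) [Countable X]
    (I : TwoSidedIdeal (FA K X)) :
    hstarIdeal K I =
      TwoSidedIdeal.span {g | ∃ f ∈ I, f ≠ 0 ∧ g = hstar K f} ⊔ Cideal K :=
  statement_1_general K X I
end

section
/- A multigraded ℕ-ideal J of P̄ is saturated if and only if for every f ∈ P̄ and every j ≥ 1, t(j)·f ∈ J implies f ∈ J. -/
/-! Every element of `J` is the sum of its multihomogeneous components, which lie in `J`, so
`J ⊆ Sat(J)`. For the converse inclusion, let `g` be multihomogeneous of multidegree `ν` with
`ψ(g) = ψ(h)`, `h ∈ J`. Padding each monomial of `ψ(g) = ψ(h)` with `t`'s up to a multidegree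
`ρ ≥ ν, ∂(h)` gives `t^{ρ-ν} g = Σ_μ t^{ρ-μ} h_μ ∈ J`, and cancelling the `t`'s gives `g ∈ J`.
Finally, if `t(j) f ∈ J` then each `f_μ` has `ψ(f_μ) = ψ((t(j) f)_{μ+e_j})`, so `f ∈ Sat(J)`. -/

noncomputable section Letterplace
open MvPolynomial
variable {K : Type*} [Field K] {X : Type*}

lemma shift_zero {Y : Type*} (f : PL K Y) : shift K 0 f = f := by
  have h : shiftVar 0 = (id : Y × ℕ+ → Y × ℕ+) := rfl
  rw [shift, h, rename_id]
  rfl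

lemma placeDeg_add {Y : Type*} (a b : (Y × ℕ+) →₀ ℕ) :
    placeDeg (a + b) = placeDeg a + placeDeg b :=
  Finsupp.mapDomain_add

lemma placeDeg_single {Y : Type*} (p : Y × ℕ+) (n : ℕ) :
    placeDeg (Finsupp.single p n) = Finsupp.single p.2 n :=
  Finsupp.mapDomain_single

lemma placeDeg_tExp (τ : ℕ+ →₀ ℕ) : placeDeg (tExp τ : (Option X × ℕ+) →₀ ℕ) = τ := by
  rw [placeDeg, tExp, ← Finsupp.mapDomain_comp]
  exact Finsupp.mapDomain_id

lemma tExp_add (a b : ℕ+ →₀ ℕ) : (tExp (a + b) : (Option X × ℕ+) →₀ ℕ) = tExp a + tExp b :=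
  Finsupp.mapDomain_add

lemma monomial_tExp (τ : ℕ+ →₀ ℕ) :
    monomial (tExp τ) (1 : K) =
      τ.prod fun j n => (MvPolynomial.X ((none : Option X), j) : PL K (Option X)) ^ n := by
  rw [monomial_eq, C_1, one_mul, tExp,
    Finsupp.prod_mapDomain_index (fun _ => pow_zero _) (fun _ _ _ => pow_add _ _ _)]

def stripT (m : (Option X × ℕ+) →₀ ℕ) : (Option X × ℕ+) →₀ ℕ :=
  m.filter fun p => p.1.isSome

lemma stripT_add_tExp (m : (Option X × ℕ+) →₀ ℕ) :
    stripT m + tExp (placeDeg (m.filter fun p => ¬ p.1.isSome)) = m := by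
  have htExp :
      tExp (placeDeg (m.filter fun p => ¬ p.1.isSome)) = m.filter fun p => ¬ p.1.isSome := by
    rw [placeDeg, tExp, ← Finsupp.mapDomain_comp, Finsupp.mapDomain_congr (g := id),
      Finsupp.mapDomain_id]
    intro p hp
    rw [Finsupp.support_filter, Finset.mem_filter, Option.not_isSome_iff_eq_none] at hp
    exact Prod.ext hp.2.symm rfl
  rw [htExp, stripT, Finsupp.filter_add_filter_not]

lemma psi_monomial (m : (Option X × ℕ+) →₀ ℕ) (c : K) :
    psi K (monomial m c) = monomial (stripT m) c := by
  rw [psi, aeval_monomial, algebraMap_eq, ← Finsupp.prod_filter_mul_prod_filter_not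
    (fun p : Option X × ℕ+ => p.1.isSome)]
  have htPart : (m.filter fun p => ¬ p.1.isSome).prod
      (fun p e => Option.elim p.1 (1 : PL K (Option X)) (fun x => MvPolynomial.X (some x, p.2)) ^ e)
      = 1 := by
    refine Finset.prod_eq_one fun p hp => ?_
    rw [Finsupp.support_filter, Finset.mem_filter, Option.not_isSome_iff_eq_none] at hp
    simp only [hp.2, Option.elim_none, one_pow]
  have htFree : (m.filter fun p => p.1.isSome).prod
      (fun p e => Option.elim p.1 (1 : PL K (Option X)) (fun x => MvPolynomial.X (some x, p.2)) ^ e)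
      = (stripT m).prod fun p e => MvPolynomial.X p ^ e := by
    refine Finset.prod_congr rfl fun p hp => ?_
    rw [stripT, Finsupp.support_filter, Finset.mem_filter, Option.isSome_iff_exists] at hp
    obtain ⟨x, hx⟩ := hp.2
    simp only [hx, Option.elim_some, stripT]
    rw [← hx]
  rw [htPart, htFree, mul_one, monomial_eq]

lemma psi_X_none (j : ℕ+) : psi K (MvPolynomial.X ((none : Option X), j)) = 1 := by
  rw [psi, aeval_X]
  rfl

def padExp (ρ : ℕ+ →₀ ℕ) (n : (Option X × ℕ+) →₀ ℕ) : (Option X × ℕ+) →₀ ℕ :=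
  n + tExp (ρ - placeDeg n)

/-- `mhstarO` with the top multidegree replaced by a fixed `ρ`, which makes it additive. -/
def padT (ρ : ℕ+ →₀ ℕ) : PL K (Option X) →+ PL K (Option X) :=
  AddMonoidHom.mk' (AddMonoidAlgebra.mapDomain (padExp ρ)) fun _ _ =>
    AddMonoidAlgebra.mapDomain_add _ _ _

lemma padT_monomial (ρ : ℕ+ →₀ ℕ) (n : (Option X × ℕ+) →₀ ℕ) (c : K) :
    padT ρ (monomial n c) = monomial (padExp ρ n) c :=
  AddMonoidAlgebra.mapDomain_single

lemma padT_psi_of_isMultiHomog {ρ μ : ℕ+ →₀ ℕ} {f : PL K (Option X)}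
    (hf : IsMultiHomog K μ f) (hμρ : μ ≤ ρ) :
    padT ρ (psi K f) = monomial (tExp (ρ - μ)) (1 : K) * f := by
  conv_lhs => rw [← support_sum_monomial_coeff f]
  conv_rhs => rw [← support_sum_monomial_coeff f]
  rw [map_sum, map_sum, Finset.mul_sum]
  refine Finset.sum_congr rfl fun m hm => ?_
  rw [psi_monomial, padT_monomial, monomial_mul, one_mul, padExp]
  congr 1
  set τ := placeDeg (m.filter fun p => ¬ p.1.isSome)
  have hsplit : stripT m + tExp τ = m := stripT_add_tExp m
  have hμ : placeDeg (stripT m) + τ = μ := by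
    rw [← hf m hm]
    simpa only [placeDeg_add, placeDeg_tExp] using congrArg placeDeg hsplit
  have hρ : ρ - placeDeg (stripT m) = (ρ - μ) + τ := by
    rw [← hμ, tsub_add_eq_tsub_tsub, tsub_add_cancel_of_le]
    exact le_tsub_of_add_le_left (hμ ▸ hμρ)
  conv_rhs => rw [← hsplit]
  rw [hρ, tExp_add, add_left_comm]

lemma coeff_mComp {Y : Type*} (μ : ℕ+ →₀ ℕ) (f : PL K Y) (m : (Y × ℕ+) →₀ ℕ) :
    coeff m (mComp K μ f) = if placeDeg m = μ then coeff m f else 0 := by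
  classical
  simp only [mComp, coeff_sum, coeff_monomial, Finset.sum_ite_eq', Finset.mem_filter,
    mem_support_iff]
  split_ifs <;> simp_all

lemma isMultiHomog_mComp {Y : Type*} (μ : ℕ+ →₀ ℕ) (f : PL K Y) :
    IsMultiHomog K μ (mComp K μ f) := by
  intro m hm
  rw [mem_support_iff, coeff_mComp] at hm
  exact not_not.mp fun h => hm (if_neg h)

lemma sum_mComp {Y : Type*} (f : PL K Y) :
    ∑ μ ∈ f.support.image placeDeg, mComp K μ f = f := by
  classical
  simp only [mComp]
  rw [Finset.sum_fiberwise_of_maps_to fun m hm => Finset.mem_image_of_mem _ hm]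
  exact support_sum_monomial_coeff f

lemma mComp_X_mul {Y : Type*} (p : Y × ℕ+) (μ : ℕ+ →₀ ℕ) (f : PL K Y) :
    mComp K (μ + Finsupp.single p.2 1) (MvPolynomial.X p * f) =
      MvPolynomial.X p * mComp K μ f := by
  classical
  ext m
  rw [coeff_mComp, coeff_X_mul', coeff_X_mul', coeff_mComp]
  by_cases hp : p ∈ m.support
  · have hm : placeDeg m = placeDeg (m - Finsupp.single p 1) + Finsupp.single p.2 1 := by
      conv_lhs => rw [← tsub_add_cancel_of_le (Finsupp.single_le_iff.mpr
        (Nat.one_le_iff_ne_zero.mpr (Finsupp.mem_support_iff.mp hp)))]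
      rw [placeDeg_add, placeDeg_single]
    simp only [if_pos hp, hm, add_left_inj]
  · simp only [if_neg hp, ite_self]

variable {J : Ideal (PL K (Option X))}

lemma mem_of_tMonomial_mul_mem
    (hcancel : ∀ (f : PL K (Option X)) (j : ℕ+),
      MvPolynomial.X ((none : Option X), j) * f ∈ J → f ∈ J)
    (τ : ℕ+ →₀ ℕ) {f : PL K (Option X)} (hf : monomial (tExp τ) (1 : K) * f ∈ J) : f ∈ J := by
  let S : Submonoid (PL K (Option X)) :=
    { carrier := {p | ∀ f, p * f ∈ J → f ∈ J}
      one_mem' := fun f h => by simpa using h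
      mul_mem' := fun hp hq f h => hq f (hp _ (by rwa [← mul_assoc])) }
  have hτ : monomial (tExp τ) (1 : K) ∈ S := by
    rw [monomial_tExp]
    exact Submonoid.prod_mem _ fun j _ => pow_mem (show _ ∈ S from (hcancel · j)) _
  exact hτ f hf

lemma exists_tMonomial_mul_mem (hMG : IsMultiGraded K J)
    {ν : ℕ+ →₀ ℕ} {g h : PL K (Option X)} (hg : IsMultiHomog K ν g) (hh : h ∈ J)
    (hgh : psi K g = psi K h) : ∃ τ : ℕ+ →₀ ℕ, monomial (tExp τ) (1 : K) * g ∈ J := by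
  set ρ := ν ⊔ topDeg K h
  refine ⟨ρ - ν, ?_⟩
  have hsum : psi K h = ∑ μ ∈ h.support.image placeDeg, psi K (mComp K μ h) := by
    rw [← map_sum, sum_mComp]
  rw [← padT_psi_of_isMultiHomog hg le_sup_left, hgh, hsum, map_sum]
  refine Ideal.sum_mem _ fun μ hμ => ?_
  obtain ⟨m, hm, rfl⟩ := Finset.mem_image.mp hμ
  have hmρ : placeDeg m ≤ ρ := (Finset.le_sup hm).trans le_sup_right
  rw [padT_psi_of_isMultiHomog (isMultiHomog_mComp _ h) hmρ]
  exact J.mul_mem_left _ (hMG h hh _)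

lemma mem_satP_of_isMultiHomog {μ : ℕ+ →₀ ℕ}
    {g h : PL K (Option X)} (hg : IsMultiHomog K μ g) (hh : h ∈ J) (hgh : psi K g = psi K h) :
    g ∈ SatP K J :=
  Ideal.subset_span ⟨0, g, ⟨⟨μ, hg⟩, h, hh, hgh⟩, (shift_zero g).symm⟩

lemma le_satP (hMG : IsMultiGraded K J) : J ≤ SatP K J := by
  intro f hf
  rw [← sum_mComp f]
  exact Ideal.sum_mem _ fun μ _ =>
    mem_satP_of_isMultiHomog (isMultiHomog_mComp μ f) (hMG f hf μ) rfl

lemma mem_satP_of_X_mul_mem (hMG : IsMultiGraded K J)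
    {f : PL K (Option X)} {j : ℕ+} (hf : MvPolynomial.X ((none : Option X), j) * f ∈ J) :
    f ∈ SatP K J := by
  rw [← sum_mComp f]
  refine Ideal.sum_mem _ fun μ _ => mem_satP_of_isMultiHomog (isMultiHomog_mComp μ f)
    (h := MvPolynomial.X ((none : Option X), j) * mComp K μ f) ?_ ?_
  · rw [← mComp_X_mul]
    exact hMG _ hf _
  · rw [map_mul, psi_X_none, one_mul]

lemma satP_le (hN : IsNIdeal K J) (hMG : IsMultiGraded K J)
    (hcancel : ∀ (f : PL K (Option X)) (j : ℕ+),
      MvPolynomial.X ((none : Option X), j) * f ∈ J → f ∈ J) :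
    SatP K J ≤ J := by
  rw [SatP, nspan, Ideal.span_le]
  rintro _ ⟨k, g, ⟨⟨ν, hg⟩, h, hh, hgh⟩, rfl⟩
  obtain ⟨τ, hτ⟩ := exists_tMonomial_mul_mem hMG hg hh hgh
  exact hN k g (mem_of_tMonomial_mul_mem hcancel τ hτ)

end Letterplace

theorem statement_5_general (K : Type*) [Field K] (X : Type*)
    (J : Ideal (PL K (Option X))) (hN : IsNIdeal K J) (hMG : IsMultiGraded K J) :
    SatP K J = J ↔
      ∀ (f : PL K (Option X)) (j : ℕ+),
        MvPolynomial.X ((none : Option X), j) * f ∈ J → f ∈ J :=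
  ⟨fun hSat _ _ hf => hSat ▸ mem_satP_of_X_mul_mem hMG hf,
    fun hcancel => le_antisymm (satP_le hN hMG hcancel) (le_satP hMG)⟩

/-- A multigraded ℕ-ideal `J ⊆ P̄` is saturated (`J = Sat(J) = ψ(J)^*`) if and
only if `t(j)·f ∈ J` implies `f ∈ J`, for every `f ∈ P̄ ` and `j ≥ 1`. -/
theorem statement_5 (K : Type*) [Field K] (X : Type*) [Countable X]
    (J : Ideal (PL K (Option X))) (hN : IsNIdeal K J) (hMG : IsMultiGraded K J) :
    SatP K J = J ↔
      ∀ (f : PL K (Option X)) (j : ℕ+),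
        MvPolynomial.X ((none : Option X), j) * f ∈ J → f ∈ J :=
  statement_5_general K X J hN hMG
end
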